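/- Let X be a nonempty topological space and let P be a nonempty family of filters on a set I. Then the following are equivalent: (1) every power of X is sequencewise P-compact; (2) the power X^{|P|} is sequencewise P-compact; (3) X is F-compact for some F ∈ P. Moreover, if these conditions hold and X has two disjoint nonempty closed subsets, then any F ∈ P such that X is F-compact is an ultrafilter. -/
import Mathlib


universe u v

/-- `p` is an `F`-limit point of the `I`-indexed sequence `s`: every open
neighborhood of `p` captures the sequence on a set of indices belonging to `F`. -/
def FLimitPt {I : Type*} {X : Type*} [TopologicalSpace X] (F : Filter I)
    (s : I → X) (p : X) : Prop :=
  ∀ U : Set X, IsOpen U → p ∈ U → {i | s i ∈ U} ∈ F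

/-- `X` is `F`-compact: every sequence indexed by the underlying set of `F`
has an `F`-limit point. -/
def FCompact {I : Type*} (F : Filter I) (X : Type*) [TopologicalSpace X] : Prop :=
  ∀ s : I → X, ∃ p : X, FLimitPt F s p

/-- `X` is sequencewise `P`-compact: every `I`-indexed sequence in `X` has an
`F`-limit point for some `F ∈ P`. -/
def SeqwisePCompact {I : Type*} (P : Set (Filter I)) (X : Type*)
    [TopologicalSpace X] : Prop :=
  ∀ s : I → X, ∃ F ∈ P, ∃ p : X, FLimitPt F s p


lemma fLimitPt_iff_tendsto {I X : Type*} [TopologicalSpace X] (F : Filter I)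
    (s : I → X) (p : X) : FLimitPt F s p ↔ Filter.Tendsto s F (nhds p) := by
  constructor
  · intro h
    intro U hU
    rcases mem_nhds_iff.1 hU with ⟨V, hVU, hV, hpV⟩
    exact Filter.mem_of_superset (h V hV hpV) (fun i hi => hVU hi)
  · intro h U hU hpU
    exact h (hU.mem_nhds hpU)

theorem stmt_5 {I : Type u} (P : Set (Filter I)) (hP : P.Nonempty)
    (X : Type u) [TopologicalSpace X] [Nonempty X] :
    (List.TFAE
      [ -- (1) every power of `X` is sequencewise `P`-compact
        ∀ J : Type u, SeqwisePCompact P (J → X),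
        -- (2) the power `X ^ |P|` is sequencewise `P`-compact
        SeqwisePCompact P (P → X),
        -- (3) `X` is `F`-compact for some `F ∈ P`
        ∃ F ∈ P, FCompact F X ])
    ∧ -- moreover, if the above conditions hold and `X` has two disjoint
      -- nonempty closed subsets, then any `F ∈ P` such that `X` is `F`-compact
      -- is an ultrafilter
      ((∃ F ∈ P, FCompact F X) →
        (∃ C D : Set X, IsClosed C ∧ IsClosed D ∧ C.Nonempty ∧ D.Nonempty ∧
          Disjoint C D) →
        ∀ F ∈ P, FCompact F X → ∀ A : Set I, A ∈ F ∨ Aᶜ ∈ F) := by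
  constructor
  · tfae_have 3 → 1 := by
      rintro ⟨F, hFP, hF⟩ J s
      choose p hp using fun j => hF (fun i => s i j)
      refine ⟨F, hFP, p, (fLimitPt_iff_tendsto F s p).2 ?_⟩
      rw [tendsto_pi_nhds]
      intro j
      exact (fLimitPt_iff_tendsto F _ _).1 (hp j)
    tfae_have 1 → 2 := fun h => h P
    tfae_have 2 → 3 := by
      intro h
      by_contra hc
      push_neg at hc
      have : ∀ F : P, ∃ s : I → X, ∀ p : X, ¬ FLimitPt (F : Filter I) s p := by
        rintro ⟨F, hF⟩
        have := hc F hF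
        simp only [FCompact, not_forall, not_exists] at this
        exact this
      choose t ht using this
      obtain ⟨G, hGP, p, hp⟩ := h (fun i F => t F i)
      have : FLimitPt G (t ⟨G, hGP⟩) (p ⟨G, hGP⟩) := by
        rw [fLimitPt_iff_tendsto] at hp ⊢
        have := ((continuous_apply (⟨G, hGP⟩ : P)).tendsto p).comp hp
        exact this
      exact ht ⟨G, hGP⟩ _ this
    tfae_finish
  · rintro - ⟨C, D, hC, hD, ⟨c, hc⟩, ⟨d, hd⟩, hCD⟩ F hFP hF A
    classical
    obtain ⟨p, hp⟩ := hF (fun i => if i ∈ A then c else d)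
    have hpCD : p ∉ C ∨ p ∉ D := by
      by_contra h
      push_neg at h
      exact (Set.disjoint_left.1 hCD) h.1 h.2
    rcases hpCD with hpC | hpD
    · right
      refine Filter.mem_of_superset (hp Cᶜ hC.isOpen_compl hpC) ?_
      intro i hi
      simp only [Set.mem_setOf_eq] at hi
      intro hiA
      simp [hiA] at hi
      exact hi hc
    · left
      refine Filter.mem_of_superset (hp Dᶜ hD.isOpen_compl hpD) ?_
      intro i hi
      simp only [Set.mem_setOf_eq] at hi
      by_contra hiA
      simp [hiA] at hi
      exact hi hd
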